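/- arXiv:math/0611077 — 3 statements merged into one kernel-verified Lean document; each statement's English description precedes it below -/
import Mathlib

section
/- The integer matrix L₁ with rows (7,6,3,2), (6,7,2,3), (3,2,2,0), (2,3,0,2) is positive definite, has determinant 1, and the associated bilinear form on ℤ⁴ is isomorphic (congruent over ℤ) to the standard form (identity matrix). -/
/-!
Everything follows from an explicit `P` with `P * L₁ * Pᵀ = 1`. Such a congruence forces `det P` to
be a unit, so `L₁ = Q * Qᵀ` with `Q = P⁻¹`, whence `vᵀ L₁ v = ‖Qᵀ v‖² > 0` for `v ≠ 0`, and
`det L₁ = (det P)⁻² = 1` because the units of `ℤ` are `±1`.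
-/

open Matrix
/-- The integer matrix `L₁` (the augmentation of `L` at `t = 2`). -/
def L1 : Matrix (Fin 4) (Fin 4) ℤ :=
  !![7, 6, 3, 2;
     6, 7, 2, 3;
     3, 2, 2, 0;
     2, 3, 0, 2]

namespace Matrix

variable {n R : Type*} [Fintype n]

theorem dotProduct_self_pos [Ring R] [LinearOrder R] [IsStrictOrderedRing R] {v : n → R}
    (hv : v ≠ 0) : 0 < v ⬝ᵥ v :=
  (Fintype.sum_nonneg fun i => mul_self_nonneg (v i)).lt_of_ne'
    (dotProduct_self_eq_zero.not.mpr hv)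

variable [DecidableEq n]

theorem isUnit_det_of_mul_mul_transpose_eq_one [CommRing R] {A P : Matrix n n R}
    (hA : P * A * Pᵀ = 1) : IsUnit P.det := by
  have h : P.det * A.det * P.det = 1 := by
    simpa [det_transpose] using congrArg det hA
  exact .of_mul_eq_one (A.det * P.det) (by rw [← mul_assoc, h])

theorem dotProduct_mulVec_pos_of_mul_mul_transpose_eq_one [CommRing R] [LinearOrder R]
    [IsStrictOrderedRing R] {A P : Matrix n n R} (hA : P * A * Pᵀ = 1) {v : n → R}
    (hv : v ≠ 0) : 0 < v ⬝ᵥ A *ᵥ v := by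
  have hP : IsUnit P.det := isUnit_det_of_mul_mul_transpose_eq_one hA
  have hPt : IsUnit Pᵀ.det := by rwa [det_transpose]
  have hA' : A = P⁻¹ * (P⁻¹)ᵀ := calc
    A = P⁻¹ * (P * A * Pᵀ) * (Pᵀ)⁻¹ := by
      rw [← mul_assoc, ← mul_assoc, nonsing_inv_mul _ hP, one_mul, mul_assoc,
        mul_nonsing_inv _ hPt, mul_one]
    _ = P⁻¹ * (P⁻¹)ᵀ := by rw [hA, mul_one, transpose_nonsing_inv]
  have hw : (P⁻¹)ᵀ *ᵥ v ≠ 0 := fun h => hv <| by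
    simpa [mulVec_mulVec, ← transpose_mul, nonsing_inv_mul _ hP] using congrArg (Pᵀ *ᵥ ·) h
  calc 0 < ((P⁻¹)ᵀ *ᵥ v) ⬝ᵥ ((P⁻¹)ᵀ *ᵥ v) := dotProduct_self_pos hw
    _ = v ⬝ᵥ A *ᵥ v := by
      rw [hA', ← mulVec_mulVec, dotProduct_mulVec v, ← mulVec_transpose]

theorem det_eq_one_of_mul_mul_transpose_eq_one {A P : Matrix n n ℤ} (hA : P * A * Pᵀ = 1) :
    A.det = 1 := by
  have h : P.det * A.det * P.det = 1 := by
    simpa [det_transpose] using congrArg det hA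
  linear_combination h - A.det * Int.isUnit_sq (isUnit_det_of_mul_mul_transpose_eq_one hA)

end Matrix

def orthonormalBasisL1 : Matrix (Fin 4) (Fin 4) ℤ :=
  !![-1,  0, 1, 1;
     -1,  0, 2, 1;
      0, -1, 1, 1;
      0, -1, 1, 2]

theorem orthonormalBasisL1_mul_L1_mul_transpose :
    orthonormalBasisL1 * L1 * orthonormalBasisL1ᵀ = 1 := by
  decide

/-- `L₁` is positive definite, has determinant 1, and is congruent over `ℤ`
to the identity matrix (i.e. the associated bilinear form on `ℤ⁴` is
isomorphic to the standard form). -/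
theorem stmt_1 :
    (∀ v : Fin 4 → ℤ, v ≠ 0 → 0 < v ⬝ᵥ L1.mulVec v) ∧
    L1.det = 1 ∧
    ∃ P : Matrix (Fin 4) (Fin 4) ℤ, IsUnit P.det ∧ P * L1 * Pᵀ = 1 := by
  have hP := orthonormalBasisL1_mul_L1_mul_transpose
  exact ⟨fun _ hv => dotProduct_mulVec_pos_of_mul_mul_transpose_eq_one hP hv,
    det_eq_one_of_mul_mul_transpose_eq_one hP,
    orthonormalBasisL1, isUnit_det_of_mul_mul_transpose_eq_one hP, hP⟩
end

section
/- Fix n ≥ 1 and let Λₙ = ℤ[x]/(xⁿ−1). Define the hermitian form on Λₙ⁴ given by the matrix L obtained by substituting t = x + x⁻¹ into the matrix with rows (1+t+t², t+t², 1+t, t), (t+t², 1+t+t², t, 1+t), (1+t, t, 2, 0), (t, 1+t, 0, 2), where conjugation sends x to x⁻¹. Let Lₙ be the ℤ-valued symmetric bilinear form on Λₙ⁴ ≅ ℤ⁴ⁿ obtained by taking the coefficient of the identity (coefficient of x⁰) of the Λₙ-valued form. Then the vector w = N·(e₃+e₄), where N = 1 + x + ⋯ + xⁿ⁻¹, is a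 characteristic vector for Lₙ with Lₙ(w,w) = 4n. -/
noncomputable section

/-- `Λₙ = ℤ[x]/(xⁿ−1)`, realized as the group ring `ℤ[ℤ/n]`. -/
abbrev Lam (n : ℕ) := AddMonoidAlgebra ℤ (ZMod n)

/-- The monomial `x^d` in `Λₙ`. -/
def Xp (n : ℕ) (d : ℤ) : Lam n := AddMonoidAlgebra.single ((d : ZMod n)) 1

/-- The element `t = x + x⁻¹` of `Λₙ`. -/
def tn (n : ℕ) : Lam n := Xp n 1 + Xp n (-1)

/-- The matrix `L` over `Λₙ`, obtained by substituting `t = x + x⁻¹`. -/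
def Lmat (n : ℕ) : Matrix (Fin 4) (Fin 4) (Lam n) :=
  !![1 + tn n + tn n ^ 2, tn n + tn n ^ 2, 1 + tn n, tn n;
     tn n + tn n ^ 2, 1 + tn n + tn n ^ 2, tn n, 1 + tn n;
     1 + tn n, tn n, 2, 0;
     tn n, 1 + tn n, 0, 2]

/-- The involution of `Λₙ` sending `x` to `x⁻¹`. -/
def conj (n : ℕ) (f : Lam n) : Lam n := AddMonoidAlgebra.mapDomain (fun a => -a) f

/-- The `Λₙ`-valued hermitian form on `Λₙ⁴` given by the matrix `L`. -/
def herm (n : ℕ) (v w : Fin 4 → Lam n) : Lam n :=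
  ∑ i, ∑ j, conj n (v i) * Lmat n i j * w j

/-- The `ℤ`-valued symmetric bilinear form `Lₙ` on `Λₙ⁴ ≅ ℤ⁴ⁿ`:
the coefficient of the identity (`x⁰`) of the `Λₙ`-valued hermitian form. -/
def Ln (n : ℕ) (v w : Fin 4 → Lam n) : ℤ := (herm n v w).coeff 0

/-- The norm element `N = 1 + x + ⋯ + xⁿ⁻¹` of `Λₙ`. -/
def Nn (n : ℕ) : Lam n := ∑ d ∈ Finset.range n, AddMonoidAlgebra.single ((d : ZMod n)) (1 : ℤ)

/-- The standard `Λₙ`-basis vectors `e₁, e₂, e₃, e₄` of `Λₙ⁴`. -/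
def ee (n : ℕ) (i : Fin 4) : Fin 4 → Lam n := Pi.single i 1

/-- `w` is a characteristic vector for `Lₙ`. -/
def IsChar (n : ℕ) (w : Fin 4 → Lam n) : Prop :=
  ∀ v : Fin 4 → Lam n, (2 : ℤ) ∣ Ln n w v - Ln n v v

/-!
Write `σ` for the involution `x ↦ x⁻¹` of `ℤ[G]` and `ε` for the augmentation. The constant
coefficient of `σ f * g` is the dot product of the coefficient vectors of `f` and `g`, and it is
unchanged by applying `σ`. Hence, for a hermitian matrix, the off-diagonal terms of `Lₙ(v, v)`
pair up, and a diagonal weight of the form `m + s + σ s` contributes `m · Σₐ f(a)² ≡ m · ε(f)`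
modulo `2`. For `L` this gives `Lₙ(v, v) ≡ ε(v₁) + ε(v₂)`. On the other side, `N` has all
coefficients `1`, so pairing with a multiple of `N` only sees augmentations:
`Lₙ(w, v) = 5 ε(v₁) + 5 ε(v₂) + 2 ε(v₃) + 2 ε(v₄)`, read off from the matrix `ε(L)`, and `ε(N) = n`.
-/

lemma Int.sum_sum_modEq_sum_diag_of_symm {m : ℕ} (a : Fin m → Fin m → ℤ)
    (ha : ∀ i j, a i j = a j i) : ∑ i, ∑ j, a i j ≡ ∑ i, a i i [ZMOD 2] := by
  induction m with
  | zero => simp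
  | succ m ih =>
    have hrest := ih (fun i j => a i.succ j.succ) fun i j => ha _ _
    simp only [Fin.sum_univ_succ, Finset.sum_add_distrib, ha _ 0]
    calc _ = a 0 0 + 2 * ∑ i : Fin m, a 0 i.succ + ∑ i : Fin m, ∑ j : Fin m, a i.succ j.succ := by
          ring
      _ ≡ a 0 0 + 0 + ∑ i : Fin m, a i.succ i.succ [ZMOD 2] :=
          ((Int.ModEq.refl _).add (Int.modEq_zero_iff_dvd.mpr (dvd_mul_right _ _))).add hrest
      _ = _ := by rw [add_zero]

namespace AddMonoidAlgebra

section CommRing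

variable (R G : Type*) [CommRing R] [AddCommGroup G]

def negDomainRingHom : R[G] →+* R[G] := mapDomainRingHom R (negAddMonoidHom : G →+ G)

def augmentation : R[G] →ₐ[R] R := lift R R G 1

variable {R G}

local notation "σ" => negDomainRingHom R G

local notation "ε" => augmentation R G

@[simp]
lemma coeff_negDomainRingHom (f : R[G]) (a : G) : (σ f).coeff a = f.coeff (-a) := by
  have h := Finsupp.mapDomain_apply neg_injective f.coeff (-a)
  rwa [neg_neg] at h

@[simp]
lemma negDomainRingHom_negDomainRingHom (f : R[G]) : σ (σ f) = f := by
  ext a; simp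

lemma coeff_zero_negDomainRingHom_mul (f g : R[G]) :
    (σ f * g).coeff 0 = g.coeff.sum fun a r => f.coeff a * r := by
  simp [coeff_mul_apply_right]

lemma coeff_zero_negDomainRingHom_mul_mul_comm (f c g : R[G]) :
    (σ f * c * g).coeff 0 = (σ g * σ c * f).coeff 0 := by
  have hswap : σ (σ f * c * g) = σ g * σ c * f := by
    simp only [map_mul, negDomainRingHom_negDomainRingHom]; ring
  rw [← hswap, coeff_negDomainRingHom, neg_zero]

@[simp]
lemma augmentation_single (a : G) (r : R) : ε (single a r) = r := by
  simp [augmentation]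

lemma augmentation_apply (f : R[G]) : ε f = f.coeff.sum fun _ r => r := by
  simp [augmentation, lift_apply]

@[simp]
lemma augmentation_negDomainRingHom (f : R[G]) : ε (σ f) = ε f := by
  induction f using induction_linear with
  | zero => simp
  | add f g hf hg => simp only [map_add, hf, hg]
  | single a r => simp [negDomainRingHom, mapDomain_single]

lemma coeff_zero_negDomainRingHom_mul_of_coeff_eq_one {N : R[G]} (hN : ∀ a, N.coeff a = 1)
    (g : R[G]) : (σ N * g).coeff 0 = ε g := by
  simp [coeff_zero_negDomainRingHom_mul, hN, augmentation_apply]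

end CommRing

section Int

variable {G : Type*} [AddCommGroup G]

local notation "σ" => negDomainRingHom ℤ G

local notation "ε" => augmentation ℤ G

lemma coeff_zero_negDomainRingHom_mul_self_modEq (f : ℤ[G]) :
    (σ f * f).coeff 0 ≡ ε f [ZMOD 2] := by
  rw [coeff_zero_negDomainRingHom_mul, augmentation_apply]
  refine Int.ModEq.sum fun a _ => (Int.modEq_iff_dvd.mpr ?_).symm
  simpa [mul_sub] using (Int.even_mul_pred_self (f.coeff a)).two_dvd

/-- The `s` and `σ s` terms have equal constant coefficients, so together they are even. -/
lemma coeff_zero_negDomainRingHom_mul_selfAdjoint_mul_self_modEq (f s : ℤ[G]) (m : ℤ) :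
    (σ f * ((m : ℤ[G]) + s + σ s) * f).coeff 0 ≡ m * ε f [ZMOD 2] := by
  have hsplit : σ f * ((m : ℤ[G]) + s + σ s) * f = m • (σ f * f) + σ f * s * f + σ f * σ s * f := by
    rw [zsmul_eq_mul]; ring
  rw [hsplit, coeff_add, coeff_add, Finsupp.add_apply, Finsupp.add_apply, coeff_smul,
    Finsupp.smul_apply, smul_eq_mul, ← coeff_zero_negDomainRingHom_mul_mul_comm f s f]
  calc _ = m * (σ f * f).coeff 0 + 2 * (σ f * s * f).coeff 0 := by ring
    _ ≡ m * ε f + 0 [ZMOD 2] :=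
        ((coeff_zero_negDomainRingHom_mul_self_modEq f).mul_left m).add
          (Int.modEq_zero_iff_dvd.mpr (dvd_mul_right _ _))
    _ = m * ε f := add_zero _

lemma sum_coeff_zero_hermitian_modEq {m : ℕ} (M : Matrix (Fin m) (Fin m) ℤ[G])
    (hM : ∀ i j, σ (M i j) = M j i) (v : Fin m → ℤ[G]) :
    ∑ i, ∑ j, (σ (v i) * M i j * v j).coeff 0 ≡ ∑ i, (σ (v i) * M i i * v i).coeff 0 [ZMOD 2] :=
  Int.sum_sum_modEq_sum_diag_of_symm _ fun i j => by
    rw [coeff_zero_negDomainRingHom_mul_mul_comm, hM]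

end Int

end AddMonoidAlgebra

section Lam

open AddMonoidAlgebra

local notation "σ" => negDomainRingHom ℤ (ZMod _)

local notation "ε" => augmentation ℤ (ZMod _)

variable {n : ℕ}

lemma conj_eq_negDomainRingHom (f : Lam n) : conj n f = σ f := rfl

lemma Ln_eq_sum (v w : Fin 4 → Lam n) :
    Ln n v w = ∑ i, ∑ j, (σ (v i) * Lmat n i j * w j).coeff 0 := by
  simp only [Ln, herm, coeff_sum, Finsupp.finsetSum_apply, conj_eq_negDomainRingHom]

lemma Xp_add (a b : ℤ) : Xp n (a + b) = Xp n a * Xp n b := by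
  simp [Xp, single_mul_single]

lemma Xp_zero : Xp n 0 = 1 := by
  simp [Xp, one_def]

lemma negDomainRingHom_Xp (d : ℤ) : σ (Xp n d) = Xp n (-d) := by
  simp [Xp, negDomainRingHom, mapDomain_single]

lemma negDomainRingHom_tn : σ (tn n) = tn n := by
  rw [tn, map_add, negDomainRingHom_Xp, negDomainRingHom_Xp, neg_neg, add_comm]

lemma negDomainRingHom_Lmat (i j : Fin 4) : σ (Lmat n i j) = Lmat n j i := by
  fin_cases i <;> fin_cases j <;> simp [Lmat, negDomainRingHom_tn, map_ofNat]

lemma Lmat_zero_zero :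
    Lmat n 0 0 = ((3 : ℤ) : Lam n) + (Xp n 1 + Xp n 2) + σ (Xp n 1 + Xp n 2) := by
  have h0 : Xp n 1 * Xp n (-1) = 1 := by rw [← Xp_add, add_neg_cancel, Xp_zero]
  have h2 : Xp n 2 = Xp n 1 ^ 2 := by rw [sq, ← Xp_add]; norm_num
  have hm2 : Xp n (-2) = Xp n (-1) ^ 2 := by rw [sq, ← Xp_add]; norm_num
  change 1 + tn n + tn n ^ 2 = _
  rw [map_add, negDomainRingHom_Xp, negDomainRingHom_Xp, tn, h2, hm2]
  push_cast
  linear_combination (2 : Lam n) * h0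

lemma Ln_self_modEq (v : Fin 4 → Lam n) : Ln n v v ≡ ε (v 0) + ε (v 1) [ZMOD 2] := by
  have h11 : Lmat n 1 1 = Lmat n 0 0 := rfl
  have h22 : Lmat n 2 2 = ((2 : ℤ) : Lam n) + 0 + σ 0 := by simp [Lmat]
  have h33 : Lmat n 3 3 = Lmat n 2 2 := rfl
  rw [Ln_eq_sum]
  refine (sum_coeff_zero_hermitian_modEq (Lmat n) negDomainRingHom_Lmat v).trans ?_
  rw [Fin.sum_univ_four, h11, h33, h22, Lmat_zero_zero]
  calc _ ≡ 3 * ε (v 0) + 3 * ε (v 1) + 2 * ε (v 2) + 2 * ε (v 3) [ZMOD 2] := by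
        gcongr <;> exact coeff_zero_negDomainRingHom_mul_selfAdjoint_mul_self_modEq _ _ _
    _ ≡ ε (v 0) + ε (v 1) [ZMOD 2] := by unfold Int.ModEq; omega

lemma coeff_Nn (hn : 1 ≤ n) (a : ZMod n) : (Nn n).coeff a = 1 := by
  have : NeZero n := ⟨by omega⟩
  rw [Nn, coeff_sum, Finsupp.finsetSum_apply, Finset.sum_eq_single a.val]
  · simp
  · intro d hd hne
    rw [coeff_single, Finsupp.single_apply, if_neg]
    rintro rfl
    exact hne (ZMod.val_cast_of_lt (Finset.mem_range.mp hd)).symm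
  · exact fun h => absurd (Finset.mem_range.mpr a.val_lt) h

lemma augmentation_Nn : ε (Nn n) = n := by
  simp [Nn]

lemma augmentation_Lmat (i j : Fin 4) :
    ε (Lmat n i j) = !![7, 6, 3, 2; 6, 7, 2, 3; 3, 2, 2, 0; 2, 3, 0, 2] i j := by
  have ht : ε (tn n) = 2 := by simp [tn, Xp]
  fin_cases i <;> fin_cases j <;> simp [Lmat, ht, map_ofNat]

lemma Ln_Nn_mul_left (hn : 1 ≤ n) (u v : Fin 4 → Lam n) :
    Ln n (fun i => Nn n * u i) v = ∑ i, ∑ j, ε (u i) * ε (Lmat n i j) * ε (v j) := by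
  simp only [Ln_eq_sum, map_mul, mul_assoc, augmentation_negDomainRingHom,
    coeff_zero_negDomainRingHom_mul_of_coeff_eq_one (coeff_Nn hn)]

lemma Ln_Nn_mul_e₃_add_e₄_left (hn : 1 ≤ n) (v : Fin 4 → Lam n) :
    Ln n (fun j => Nn n * (ee n 2 j + ee n 3 j)) v =
      5 * ε (v 0) + 5 * ε (v 1) + 2 * ε (v 2) + 2 * ε (v 3) := by
  simp [Ln_Nn_mul_left hn, Fin.sum_univ_four, augmentation_Lmat, ee]
  ring

end Lam

/-- For `n ≥ 1`, the vector `w = N·(e₃+e₄)` is characteristic for `Lₙ`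
and has norm `Lₙ(w,w) = 4n`. -/
theorem stmt_4 (n : ℕ) (hn : 1 ≤ n) :
    IsChar n (fun j => Nn n * (ee n 2 j + ee n 3 j)) ∧
    Ln n (fun j => Nn n * (ee n 2 j + ee n 3 j)) (fun j => Nn n * (ee n 2 j + ee n 3 j))
      = 4 * n := by
  refine ⟨fun v => ?_, ?_⟩
  · rw [← Int.modEq_iff_dvd, Ln_Nn_mul_e₃_add_e₄_left hn]
    refine (Ln_self_modEq v).trans ?_
    unfold Int.ModEq; omega
  · rw [Ln_Nn_mul_e₃_add_e₄_left hn]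
    simp [ee, augmentation_Nn]
    ring

end
end

section
/- For n = 2, the form L₂ on Λ₂⁴ ≅ ℤ⁸ (the coefficient-of-identity form of L over ℤ[x]/(x²−1)) is an odd positive definite unimodular form of rank 8, hence isomorphic to the standard form I₈. -/
noncomputable section

/-!
In `Λ₂` we have `x⁻¹ = x`, so the involution is trivial and `t = 2x`; thus `L` has entries
`a + b x` with explicit integers, and `L₂` is an explicit integral form on the coordinates
`(v i).coeff a` of `Λ₂⁴ ≅ ℤ⁸`. An explicit unimodular change of coordinates turns it into the
sum of eight squares, which gives positive definiteness and the isomorphism with `I₈`; it is odd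
because `L₂(e₁, e₁) = (1 + t + t²)₀ = 5`.
-/

open AddMonoidAlgebra

theorem Matrix.dotProduct_self_pos_s6 {n R : Type*} [Fintype n] [Ring R] [LinearOrder R]
    [IsStrictOrderedRing R] {v : n → R} (hv : v ≠ 0) : 0 < v ⬝ᵥ v :=
  (Fintype.sum_nonneg fun i => mul_self_nonneg (v i)).lt_of_ne
    (Ne.symm (dotProduct_self_eq_zero.not.mpr hv))

lemma conj_one (n : ℕ) : conj n 1 = 1 := by
  simp [conj, one_def, mapDomain_single]

lemma herm_ee (n : ℕ) (i j : Fin 4) : herm n (ee n i) (ee n j) = Lmat n i j := by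
  have conj_zero : conj n 0 = 0 := mapDomain_zero _
  simp [herm, ee, Pi.single_apply, apply_ite (conj n), conj_one, conj_zero]

namespace Lam2

/-- The element `a + b x` of `Λ₂`. -/
def mk (a b : ℤ) : Lam 2 := single 0 a + single 1 b

@[simp] lemma coeff_mk_zero (a b : ℤ) : (mk a b).coeff 0 = a := by
  simp [mk, coeff_add, coeff_single]

@[simp] lemma coeff_mk_one (a b : ℤ) : (mk a b).coeff 1 = b := by
  simp [mk, coeff_add, coeff_single]

lemma mk_coeff (f : Lam 2) : mk (f.coeff 0) (f.coeff 1) = f := by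
  ext a; fin_cases a
  exacts [coeff_mk_zero _ _, coeff_mk_one _ _]

lemma mk_zero_zero : mk 0 0 = 0 := by simp [mk]

lemma mk_add_mk (a b c d : ℤ) : mk a b + mk c d = mk (a + c) (b + d) := by
  simp only [mk, single_add]; abel

lemma mk_mul_mk (a b c d : ℤ) : mk a b * mk c d = mk (a * c + b * d) (a * d + b * c) := by
  simp only [mk, add_mul, mul_add, single_mul_single, single_add,
    show (1 + 1 : ZMod 2) = 0 from rfl, add_zero, zero_add]
  abel

lemma one_eq_mk : (1 : Lam 2) = mk 1 0 := by
  simp [mk, one_def]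

lemma two_eq_mk : (2 : Lam 2) = mk 2 0 :=
  calc (2 : Lam 2) = 1 + 1 := one_add_one_eq_two.symm
    _ = mk 2 0 := by rw [one_eq_mk, mk_add_mk]; rfl

lemma tn_eq_mk : tn 2 = mk 0 2 := by
  have h : ((-1 : ℤ) : ZMod 2) = 1 := by decide
  simp only [tn, Xp, h, Int.cast_one, mk, single_zero, zero_add, ← single_add]
  rfl

lemma conj_eq_self (f : Lam 2) : conj 2 f = f := by
  rw [conj, show (fun a : ZMod 2 => -a) = id from funext ZMod.neg_eq_self_mod_two]
  ext; simp [mapDomain]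

lemma coeff_add_apply (f g : Lam 2) (a : ZMod 2) : (f + g).coeff a = f.coeff a + g.coeff a :=
  rfl

lemma coeff_mul_zero (f g : Lam 2) :
    (f * g).coeff 0 = f.coeff 0 * g.coeff 0 + f.coeff 1 * g.coeff 1 := by
  conv_lhs => rw [← mk_coeff f, ← mk_coeff g, mk_mul_mk]
  exact coeff_mk_zero _ _

lemma coeff_mul_one (f g : Lam 2) :
    (f * g).coeff 1 = f.coeff 0 * g.coeff 1 + f.coeff 1 * g.coeff 0 := by
  conv_lhs => rw [← mk_coeff f, ← mk_coeff g, mk_mul_mk]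
  exact coeff_mk_one _ _

lemma Lmat_two_eq : Lmat 2 =
    !![mk 5 2, mk 4 2, mk 1 2, mk 0 2;
       mk 4 2, mk 5 2, mk 0 2, mk 1 2;
       mk 1 2, mk 0 2, mk 2 0, mk 0 0;
       mk 0 2, mk 1 2, mk 0 0, mk 2 0] := by
  simp only [Lmat, tn_eq_mk, one_eq_mk, two_eq_mk, pow_two, mk_mul_mk, mk_add_mk, mk_zero_zero]
  norm_num

/-- The coordinate of `v` at `eᵢ xᵃ` in the standard `ℤ`-basis of `Λ₂⁴`. -/
def coord (i : Fin 4) (a : ZMod 2) : (Fin 4 → Lam 2) →ₗ[ℤ] ℤ :=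
  Finsupp.lapply a ∘ₗ (coeffLinearEquiv ℤ).toLinearMap ∘ₗ LinearMap.proj i

@[simp] lemma coord_apply (i : Fin 4) (a : ZMod 2) (v : Fin 4 → Lam 2) :
    coord i a v = (v i).coeff a := rfl

-- `ofStd` sends the standard basis `eₖ` of `ℤ⁸` to an orthonormal basis of `L₂`, and
-- `toStdLinear v k = L₂(ofStd eₖ, v)`.
def toStdLinear : (Fin 4 → Lam 2) →ₗ[ℤ] (Fin 8 → ℤ) :=
  LinearMap.pi ![-coord 0 0 - coord 1 0 - coord 3 1,
    coord 0 0 + coord 1 0 + coord 1 1 + coord 3 1,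
    -coord 0 1 - coord 1 1 - coord 3 0,
    coord 0 1 + coord 1 0 + coord 1 1 + coord 3 0,
    -coord 0 0 - coord 1 0 - coord 2 1,
    coord 0 0 + coord 0 1 + coord 1 0 + coord 2 1,
    -coord 0 1 - coord 1 1 - coord 2 0,
    coord 0 0 + coord 0 1 + coord 1 1 + coord 2 0]

def ofStd (a : Fin 8 → ℤ) : Fin 4 → Lam 2 :=
  ![mk (a 6 + a 7) (a 4 + a 5),
    mk (a 2 + a 3) (a 0 + a 1),
    mk (-a 0 - a 1 - a 4 - a 5 - a 6) (-a 2 - a 3 - a 4 - a 6 - a 7),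
    mk (-a 0 - a 1 - a 2 - a 4 - a 5) (-a 0 - a 2 - a 3 - a 6 - a 7)]

lemma ofStd_toStdLinear (v : Fin 4 → Lam 2) : ofStd (toStdLinear v) = v := by
  funext i
  fin_cases i <;> refine (congrArg₂ mk ?_ ?_).trans (mk_coeff _) <;>
    simp [toStdLinear] <;> ring

lemma toStdLinear_ofStd (a : Fin 8 → ℤ) : toStdLinear (ofStd a) = a := by
  funext k
  fin_cases k <;> simp [ofStd, toStdLinear] <;> ring

def toStd : (Fin 4 → Lam 2) ≃ₗ[ℤ] (Fin 8 → ℤ) :=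
  { toStdLinear with
    invFun := ofStd
    left_inv := ofStd_toStdLinear
    right_inv := toStdLinear_ofStd }

lemma Ln_eq_dotProduct_toStd (v w : Fin 4 → Lam 2) : Ln 2 v w = toStd v ⬝ᵥ toStd w := by
  simp only [Ln, herm, conj_eq_self, Lmat_two_eq, Fin.sum_univ_four, coeff_add_apply,
    coeff_mul_zero, coeff_mul_one, Matrix.of_apply, Matrix.cons_val', Matrix.cons_val_zero,
    Matrix.cons_val_one, Matrix.cons_val_two, Matrix.cons_val_three, Matrix.empty_val',
    Matrix.cons_val_fin_one, coeff_mk_zero, coeff_mk_one]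
  simp [toStd, toStdLinear, dotProduct, Fin.sum_univ_eight]
  ring

lemma Ln_ee_zero : Ln 2 (ee 2 0) (ee 2 0) = 5 := by
  simp [Ln, herm_ee, Lmat_two_eq]

end Lam2

/-- The form `L₂` on `Λ₂⁴ ≅ ℤ⁸` is odd, positive definite, and (being an odd positive
definite unimodular form of rank 8) isomorphic to the standard form `I₈`. -/
theorem stmt_6 :
    (∃ v : Fin 4 → Lam 2, Odd (Ln 2 v v)) ∧
    (∀ v : Fin 4 → Lam 2, v ≠ 0 → 0 < Ln 2 v v) ∧
    ∃ φ : (Fin 4 → Lam 2) ≃ₗ[ℤ] (Fin 8 → ℤ),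
      ∀ v w : Fin 4 → Lam 2, Ln 2 v w = ∑ i, φ v i * φ w i := by
  refine ⟨⟨ee 2 0, by rw [Lam2.Ln_ee_zero]; decide⟩, fun v hv => ?_,
    ⟨Lam2.toStd, Lam2.Ln_eq_dotProduct_toStd⟩⟩
  rw [Lam2.Ln_eq_dotProduct_toStd]
  exact Matrix.dotProduct_self_pos_s6 (Lam2.toStd.map_ne_zero_iff.mpr hv)

end
end
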